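/- arXiv:2605.02304 — 4 statements merged into one kernel-verified Lean document; each statement's English description precedes it below -/
import Mathlib

section
/- Let H be a countable amenable group with Følner sequence (Φ_N), and let (a_g)_{g∈H} be a bounded family of elements of a Hilbert space. If limsup_{N→∞} (1/|Φ_N|²) · limsup_{M→∞} (1/|Φ_M|) Σ_{g∈Φ_M} Σ_{h,k∈Φ_N} ⟨a_{hg}, a_{kg}⟩ = 0, then limsup_{N→∞} ‖(1/|Φ_N|) Σ_{g∈Φ_N} a_g‖² = 0. -/
open Filter

/-- A Følner sequence in a countable group `H`. -/
def IsFolner {H : Type*} [Group H] [DecidableEq H] (Φ : ℕ → Finset H) : Prop :=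
  (∀ N, (Φ N).Nonempty) ∧
    ∀ h : H, Tendsto
      (fun N => ((symmDiff ((Φ N).image (fun g => h * g)) (Φ N)).card : ℝ) / (Φ N).card)
      atTop (nhds 0)

/-! Averages over a Følner sequence are asymptotically invariant under left translation, so for a
fixed finite `S` the average of `a` over `Φ M` is, as `M → ∞`, close to the average over `g ∈ Φ M`
of the averages of `h ↦ a (h * g)` over `S`. By convexity of `‖·‖²`, the square norm of the latter
is at most the average over `g ∈ Φ M` of `‖(1 / |S|) • ∑ h ∈ S, a (h * g)‖²`, and expanding this
square norm shows that for `S = Φ N` its limsup in `M` is the `N`-th term of the hypothesis. So the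
limsup of the square norms of the Følner averages lies below every term of a sequence whose
limsup is `0`. -/

open Finset Topology

section Averages

variable {ι E : Type*} [SeminormedAddCommGroup E]

lemma one_div_card_mul_sum_le {s : Finset ι} {f : ι → ℝ} {C : ℝ} (hC : 0 ≤ C)
    (hf : ∀ i ∈ s, f i ≤ C) : 1 / (#s : ℝ) * ∑ i ∈ s, f i ≤ C := by
  rcases s.eq_empty_or_nonempty with rfl | hs
  · simpa using hC
  rw [one_div, inv_mul_le_iff₀ (by positivity)]
  simpa using sum_le_card_nsmul s f C hf

lemma norm_one_div_card_smul_sum_le_one_div_card_mul_sum_norm [NormedSpace ℝ E]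
    (s : Finset ι) (f : ι → E) :
    ‖(1 / (#s : ℝ)) • ∑ i ∈ s, f i‖ ≤ 1 / (#s : ℝ) * ∑ i ∈ s, ‖f i‖ := by
  rw [norm_smul, Real.norm_of_nonneg (by positivity)]
  gcongr
  exact norm_sum_le s f

lemma norm_one_div_card_smul_sum_le [NormedSpace ℝ E] {s : Finset ι} {f : ι → E} {C : ℝ}
    (hC : 0 ≤ C) (hf : ∀ i ∈ s, ‖f i‖ ≤ C) : ‖(1 / (#s : ℝ)) • ∑ i ∈ s, f i‖ ≤ C :=
  (norm_one_div_card_smul_sum_le_one_div_card_mul_sum_norm s f).trans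
    (one_div_card_mul_sum_le hC hf)

lemma norm_one_div_card_smul_sum_sq_le [NormedSpace ℝ E] (s : Finset ι) (f : ι → E) :
    ‖(1 / (#s : ℝ)) • ∑ i ∈ s, f i‖ ^ 2 ≤ 1 / (#s : ℝ) * ∑ i ∈ s, ‖f i‖ ^ 2 := by
  calc ‖(1 / (#s : ℝ)) • ∑ i ∈ s, f i‖ ^ 2 ≤ (1 / (#s : ℝ) * ∑ i ∈ s, ‖f i‖) ^ 2 := by
        gcongr
        exact norm_one_div_card_smul_sum_le_one_div_card_mul_sum_norm s f
    _ = ((∑ i ∈ s, ‖f i‖) / #s) ^ 2 := by rw [one_div_mul_eq_div]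
    _ ≤ (∑ i ∈ s, ‖f i‖ ^ 2) / #s := sum_div_card_sq_le_sum_sq_div_card
    _ = 1 / (#s : ℝ) * ∑ i ∈ s, ‖f i‖ ^ 2 := by rw [one_div_mul_eq_div]

lemma norm_sum_sub_sum_le_mul_card_symmDiff [DecidableEq ι] (s t : Finset ι) {f : ι → E}
    {C : ℝ} (hf : ∀ i, ‖f i‖ ≤ C) : ‖∑ i ∈ t, f i - ∑ i ∈ s, f i‖ ≤ C * #(symmDiff t s) := by
  rw [← sum_sdiff_sub_sum_sdiff, symmDiff_def, sup_eq_union,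
    card_union_of_disjoint disjoint_sdiff_sdiff]
  calc _ ≤ ‖∑ i ∈ t \ s, f i‖ + ‖∑ i ∈ s \ t, f i‖ := norm_sub_le _ _
    _ ≤ ∑ i ∈ t \ s, C + ∑ i ∈ s \ t, C :=
        add_le_add (norm_sum_le_of_le _ fun i _ => hf i) (norm_sum_le_of_le _ fun i _ => hf i)
    _ = C * ↑(#(t \ s) + #(s \ t)) := by simp [mul_add, mul_comm]

lemma sum_sum_inner_eq_sq_card_mul_norm_sq {F : Type*} [NormedAddCommGroup F]
    [InnerProductSpace ℝ F] (s : Finset ι) (f : ι → F) :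
    ∑ i ∈ s, ∑ j ∈ s, inner ℝ (f i) (f j) = (#s : ℝ) ^ 2 * ‖(1 / (#s : ℝ)) • ∑ i ∈ s, f i‖ ^ 2 := by
  rcases s.eq_empty_or_nonempty with rfl | hs
  · simp
  have hcard : (#s : ℝ) ≠ 0 := by positivity
  rw [norm_smul, mul_pow, ← mul_assoc, Real.norm_of_nonneg (by positivity), ← mul_pow,
    mul_one_div_cancel hcard, one_pow, one_mul, ← real_inner_self_eq_norm_sq, sum_inner]
  simp_rw [inner_sum]

lemma sq_norm_le_sq_norm_add_mul_norm_sub {x y : E} {C : ℝ} (hx : ‖x‖ ≤ C) (hy : ‖y‖ ≤ C) :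
    ‖x‖ ^ 2 ≤ ‖y‖ ^ 2 + 2 * C * ‖x - y‖ := by
  nlinarith [norm_nonneg x, norm_nonneg y, norm_nonneg (x - y), norm_sub_norm_le x y]

end Averages

section Limsup

variable {ι : Type*} {F : Filter ι} [F.NeBot]

lemma limsup_le_limsup_of_le_add_of_tendsto_zero {u v e : ι → ℝ}
    (h : ∀ᶠ i in F, u i ≤ v i + e i) (he : Tendsto e F (𝓝 0))
    (hu : IsCoboundedUnder (· ≤ ·) F u) (hv : IsBoundedUnder (· ≤ ·) F v)
    (hv' : IsBoundedUnder (· ≥ ·) F v) : limsup u F ≤ limsup v F :=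
  calc limsup u F ≤ limsup (v + e) F :=
        limsup_le_limsup h hu (isBoundedUnder_le_add hv he.isBoundedUnder_le)
    _ ≤ limsup v F + limsup e F :=
        limsup_add_le hv' hv he.isCoboundedUnder_le he.isBoundedUnder_le
    _ = limsup v F := by rw [he.limsup_eq, add_zero]

lemma Real.limsup_const_mul_of_nonneg {u : ι → ℝ} {c : ℝ} (hc : 0 ≤ c)
    (hu : IsBoundedUnder (· ≤ ·) F u) (hu' : IsCoboundedUnder (· ≤ ·) F u) :
    limsup (fun i => c * u i) F = c * limsup u F :=
  ((monotone_mul_left_of_nonneg hc).map_limsup_of_continuousAt u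
    (continuous_const_mul c).continuousAt hu hu').symm

end Limsup

section Correlations

variable {H E : Type*} [Group H] [SeminormedAddCommGroup E] [NormedSpace ℝ E] {a : H → E} {C : ℝ}

lemma one_div_card_mul_sum_norm_avg_mul_sq_le (ha : ∀ g, ‖a g‖ ≤ C) (s S : Finset H) :
    1 / (#s : ℝ) * ∑ g ∈ s, ‖(1 / (#S : ℝ)) • ∑ h ∈ S, a (h * g)‖ ^ 2 ≤ C ^ 2 := by
  have hC : 0 ≤ C := (norm_nonneg _).trans (ha 1)
  refine one_div_card_mul_sum_le (sq_nonneg C) fun g _ => ?_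
  gcongr
  exact norm_one_div_card_smul_sum_le hC fun h _ => ha (h * g)

lemma one_div_sq_card_mul_limsup_sum_inner {F : Type*} [NormedAddCommGroup F]
    [InnerProductSpace ℝ F] {b : H → F} (hb : ∀ g, ‖b g‖ ≤ C) (Φ : ℕ → Finset H)
    {S : Finset H} (hS : S.Nonempty) :
    1 / (#S : ℝ) ^ 2 * limsup (fun M => 1 / (#(Φ M) : ℝ) *
        ∑ g ∈ Φ M, ∑ h ∈ S, ∑ k ∈ S, inner ℝ (b (h * g)) (b (k * g))) atTop =
      limsup (fun M => 1 / (#(Φ M) : ℝ) *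
        ∑ g ∈ Φ M, ‖(1 / (#S : ℝ)) • ∑ h ∈ S, b (h * g)‖ ^ 2) atTop := by
  simp_rw [sum_sum_inner_eq_sq_card_mul_norm_sq S (fun h => b (h * _)), ← mul_sum,
    mul_left_comm (1 / _ : ℝ)]
  rw [Real.limsup_const_mul_of_nonneg (by positivity)
      (isBoundedUnder_of ⟨C ^ 2, fun M => one_div_card_mul_sum_norm_avg_mul_sq_le hb _ _⟩)
      (isBoundedUnder_of ⟨0, fun M => by positivity⟩).isCoboundedUnder_le,
    ← mul_assoc, one_div_mul_cancel (by positivity), one_mul]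

end Correlations

namespace IsFolner

variable {H E : Type*} [Group H] [DecidableEq H] [SeminormedAddCommGroup E] [NormedSpace ℝ E]
  {Φ : ℕ → Finset H} {a : H → E} {C : ℝ}

lemma tendsto_avg_mul_left_sub_avg (hΦ : IsFolner Φ) (ha : ∀ g, ‖a g‖ ≤ C) (h : H) :
    Tendsto (fun M => (1 / (#(Φ M) : ℝ)) • ∑ g ∈ Φ M, a (h * g) -
      (1 / (#(Φ M) : ℝ)) • ∑ g ∈ Φ M, a g) atTop (𝓝 0) := by
  have hlim := (hΦ.2 h).const_mul C
  rw [mul_zero] at hlim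
  refine squeeze_zero_norm (fun M => ?_) hlim
  rw [← smul_sub, ← sum_image (f := a) (mul_right_injective h).injOn, norm_smul,
    Real.norm_of_nonneg (by positivity)]
  calc 1 / (#(Φ M) : ℝ) * ‖∑ g ∈ (Φ M).image (h * ·), a g - ∑ g ∈ Φ M, a g‖
      ≤ 1 / (#(Φ M) : ℝ) * (C * #(symmDiff ((Φ M).image (h * ·)) (Φ M))) := by
        gcongr
        exact norm_sum_sub_sum_le_mul_card_symmDiff _ _ ha
    _ = C * (#(symmDiff ((Φ M).image (h * ·)) (Φ M)) / #(Φ M)) := by ring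

lemma tendsto_avg_avg_mul_left_sub_avg (hΦ : IsFolner Φ) (ha : ∀ g, ‖a g‖ ≤ C)
    {S : Finset H} (hS : S.Nonempty) :
    Tendsto (fun M => (1 / (#S : ℝ)) • ∑ h ∈ S, (1 / (#(Φ M) : ℝ)) • ∑ g ∈ Φ M, a (h * g) -
      (1 / (#(Φ M) : ℝ)) • ∑ g ∈ Φ M, a g) atTop (𝓝 0) := by
  have hlim := (tendsto_finsetSum S fun h _ => hΦ.tendsto_avg_mul_left_sub_avg ha h).const_smul
    (1 / (#S : ℝ))
  simp only [sum_const_zero, smul_zero] at hlim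
  refine hlim.congr fun M => ?_
  rw [sum_sub_distrib, smul_sub, sum_const, ← Nat.cast_smul_eq_nsmul ℝ, smul_smul,
    one_div_mul_cancel (by positivity), one_smul]

theorem limsup_norm_avg_sq_le (hΦ : IsFolner Φ) (ha : ∀ g, ‖a g‖ ≤ C) {S : Finset H}
    (hS : S.Nonempty) :
    limsup (fun M => ‖(1 / (#(Φ M) : ℝ)) • ∑ g ∈ Φ M, a g‖ ^ 2) atTop ≤
      limsup (fun M => 1 / (#(Φ M) : ℝ) *
        ∑ g ∈ Φ M, ‖(1 / (#S : ℝ)) • ∑ h ∈ S, a (h * g)‖ ^ 2) atTop := by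
  have hC : 0 ≤ C := (norm_nonneg _).trans (ha 1)
  set A := fun M => (1 / (#(Φ M) : ℝ)) • ∑ g ∈ Φ M, a g
  set B := fun M => (1 / (#S : ℝ)) • ∑ h ∈ S, (1 / (#(Φ M) : ℝ)) • ∑ g ∈ Φ M, a (h * g)
  have hA : ∀ M, ‖A M‖ ≤ C := fun M => norm_one_div_card_smul_sum_le hC fun g _ => ha g
  have hB : ∀ M, ‖B M‖ ≤ C := fun M => norm_one_div_card_smul_sum_le hC fun h _ =>
    norm_one_div_card_smul_sum_le hC fun g _ => ha (h * g)
  have hB_sq : ∀ M, ‖B M‖ ^ 2 ≤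
      1 / (#(Φ M) : ℝ) * ∑ g ∈ Φ M, ‖(1 / (#S : ℝ)) • ∑ h ∈ S, a (h * g)‖ ^ 2 := by
    intro M
    have hswap : B M = (1 / (#(Φ M) : ℝ)) • ∑ g ∈ Φ M, (1 / (#S : ℝ)) • ∑ h ∈ S, a (h * g) := by
      simp only [B, smul_sum, smul_comm (1 / (#S : ℝ))]
      exact sum_comm
    rw [hswap]
    exact norm_one_div_card_smul_sum_sq_le _ _
  have hAB : Tendsto (fun M => 2 * C * ‖A M - B M‖) atTop (𝓝 0) := by
    have hlim := (hΦ.tendsto_avg_avg_mul_left_sub_avg ha hS).norm.const_mul (2 * C)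
    rw [norm_zero, mul_zero] at hlim
    exact hlim.congr fun M => by rw [norm_sub_rev]
  refine limsup_le_limsup_of_le_add_of_tendsto_zero (Eventually.of_forall fun M => ?_) hAB
    (isBoundedUnder_of ⟨0, fun M => sq_nonneg ‖A M‖⟩).isCoboundedUnder_le
    (isBoundedUnder_of ⟨C ^ 2, fun M => one_div_card_mul_sum_norm_avg_mul_sq_le ha _ _⟩)
    (isBoundedUnder_of ⟨0, fun M => by positivity⟩)
  linarith [sq_norm_le_sq_norm_add_mul_norm_sub (hA M) (hB M), hB_sq M]

end IsFolner

theorem van_der_corput_amenable_general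
    {H : Type*} [Group H] [DecidableEq H]
    {E : Type*} [NormedAddCommGroup E] [InnerProductSpace ℝ E]
    (Φ : ℕ → Finset H) (hΦ : IsFolner Φ)
    (a : H → E) (C : ℝ) (hbd : ∀ g, ‖a g‖ ≤ C)
    (hyp : limsup (fun N =>
        (1 / ((Φ N).card : ℝ) ^ 2) *
          limsup (fun M => (1 / ((Φ M).card : ℝ)) *
            ∑ g ∈ Φ M, ∑ h ∈ Φ N, ∑ k ∈ Φ N, inner ℝ (a (h * g)) (a (k * g))) atTop)
      atTop = 0) :
    limsup (fun N => ‖(1 / ((Φ N).card : ℝ)) • ∑ g ∈ Φ N, a g‖ ^ 2) atTop = 0 := by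
  have hC : 0 ≤ C := (norm_nonneg _).trans (hbd 1)
  set D := fun N M => 1 / (#(Φ M) : ℝ) * ∑ g ∈ Φ M, ‖(1 / (#(Φ N) : ℝ)) • ∑ h ∈ Φ N, a (h * g)‖ ^ 2
  have hD : ∀ N, limsup (D N) atTop ≤ C ^ 2 := fun N =>
    limsup_le_of_le (isBoundedUnder_of ⟨0, fun M => by positivity⟩).isCoboundedUnder_le
      (Eventually.of_forall fun M => one_div_card_mul_sum_norm_avg_mul_sq_le hbd _ _)
  simp_rw [one_div_sq_card_mul_limsup_sum_inner hbd Φ (hΦ.1 _)] at hyp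
  refine le_antisymm ?_ ?_
  · rw [← hyp]
    exact le_limsup_of_frequently_le
      (Frequently.of_forall fun N => hΦ.limsup_norm_avg_sq_le hbd (hΦ.1 N))
      (isBoundedUnder_of ⟨C ^ 2, hD⟩)
  · exact le_limsup_of_frequently_le (Frequently.of_forall fun N => sq_nonneg _)
      (isBoundedUnder_of ⟨C ^ 2, fun N => by
        gcongr
        exact norm_one_div_card_smul_sum_le hC fun g _ => hbd g⟩)

/-- Van der Corput lemma for bounded Hilbert-space valued families indexed by a
countable amenable group (Bergelson–McCutcheon–Zhang). -/
theorem van_der_corput_amenable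
    {H : Type*} [Group H] [DecidableEq H] [Countable H]
    {E : Type*} [NormedAddCommGroup E] [InnerProductSpace ℝ E] [CompleteSpace E]
    (Φ : ℕ → Finset H) (hΦ : IsFolner Φ)
    (a : H → E) (C : ℝ) (hbd : ∀ g, ‖a g‖ ≤ C)
    (hyp : limsup (fun N =>
        (1 / ((Φ N).card : ℝ) ^ 2) *
          limsup (fun M => (1 / ((Φ M).card : ℝ)) *
            ∑ g ∈ Φ M, ∑ h ∈ Φ N, ∑ k ∈ Φ N, inner ℝ (a (h * g)) (a (k * g))) atTop)
      atTop = 0) :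
    limsup (fun N => ‖(1 / ((Φ N).card : ℝ)) • ∑ g ∈ Φ N, a g‖ ^ 2) atTop = 0 :=
  van_der_corput_amenable_general Φ hΦ a C hbd hyp
end

section
/- Let (X,T) be a topological dynamical system (T a group acting by homeomorphisms on a compact Hausdorff space X), and let R be a closed T-invariant subset of X×X. Then P(X)·R ⊆ C(R) ⊆ P(X)·R·P(X), where P(X) is the proximal relation and C(R) = {(x,y) ∈ X×X : the orbit closure of (x,y) meets R}. If moreover (X,T) is minimal, then C(R) = P(X)·R. -/
variable {T X : Type*} [Group T] [TopologicalSpace X] [CompactSpace X] [T2Space X]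
  [MulAction T X]

/-- The proximal relation: `(x, y)` is proximal if some net `t_λ` makes
`t_λ x` and `t_λ y` converge to a common point, equivalently the orbit closure of
`(x, y)` meets the diagonal. -/
def ProximalRel (T : Type*) [Group T] (X : Type*) [TopologicalSpace X] [MulAction T X] :
    Set (X × X) :=
  {p | ∃ z : X, (z, z) ∈ closure {q : X × X | ∃ t : T, q = (t • p.1, t • p.2)}}

/-- Composition of relations: `RS = {(x,z) : ∃ y, (x,y) ∈ R, (y,z) ∈ S}`. -/
def RelComp {X : Type*} (R S : Set (X × X)) : Set (X × X) :=
  {p | ∃ y, (p.1, y) ∈ R ∧ (y, p.2) ∈ S}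

/-- The capturing set of `R ⊆ X × X` for the diagonal action:
points whose orbit closure meets `R`. -/
def CapturingSet (T : Type*) [Group T] {X : Type*} [TopologicalSpace X] [MulAction T X]
    (R : Set (X × X)) : Set (X × X) :=
  {p | (closure {q : X × X | ∃ t : T, q = (t • p.1, t • p.2)} ∩ R).Nonempty}

/-- The Ellis semigroup: closure of the translations in `X → X`. -/
def EllisSet (T : Type*) [Group T] (X : Type*) [TopologicalSpace X] [MulAction T X] :
    Set (X → X) :=
  closure (Set.range fun t : T => fun x : X => t • x)

lemma translation_mem_ellis (t : T) : (fun x : X => t • x) ∈ EllisSet T X :=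
  subset_closure ⟨t, rfl⟩

lemma translation_comp_mem_ellis (hc : ∀ t : T, Continuous fun x : X => t • x)
    (t : T) {q : X → X} (hq : q ∈ EllisSet T X) : (fun x : X => t • x) ∘ q ∈ EllisSet T X := by
  have hF : Continuous (fun r : X → X => (fun x : X => t • x) ∘ r) :=
    continuous_pi fun x => (hc t).comp (continuous_apply x)
  have himg : (fun r : X → X => (fun x : X => t • x) ∘ r) ''
      (Set.range fun s : T => fun x : X => s • x) ⊆
      Set.range fun s : T => fun x : X => s • x := by
    rintro _ ⟨_, ⟨s, rfl⟩, rfl⟩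
    exact ⟨t * s, funext fun x => mul_smul t s x⟩
  have h1 : (fun x : X => t • x) ∘ q ∈
      (fun r : X → X => (fun x : X => t • x) ∘ r) '' closure
        (Set.range fun s : T => fun x : X => s • x) := ⟨q, hq, rfl⟩
  exact closure_mono himg (image_closure_subset_closure_image hF h1)

lemma comp_mem_ellis (hc : ∀ t : T, Continuous fun x : X => t • x)
    {p q : X → X} (hp : p ∈ EllisSet T X) (hq : q ∈ EllisSet T X) :
    p ∘ q ∈ EllisSet T X := by
  have hG : Continuous fun r : X → X => r ∘ q :=
    continuous_pi fun x => continuous_apply (q x)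
  have himg : (fun r : X → X => r ∘ q) '' (Set.range fun t : T => fun x : X => t • x) ⊆
      EllisSet T X := by
    rintro _ ⟨_, ⟨t, rfl⟩, rfl⟩
    exact translation_comp_mem_ellis hc t hq
  have h1 : p ∘ q ∈ (fun r : X → X => r ∘ q) ''
      closure (Set.range fun t : T => fun x : X => t • x) := ⟨p, hp, rfl⟩
  have h2 := image_closure_subset_closure_image hG h1
  have h3 : closure ((fun r : X → X => r ∘ q) ''
      (Set.range fun t : T => fun x : X => t • x)) ⊆ EllisSet T X := by
    have : IsClosed (EllisSet T X) := isClosed_closure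
    exact closure_minimal himg this
  exact h3 h2

/-- Evaluating an element of the Ellis semigroup at a pair lands in the orbit closure. -/
lemma ellis_eval_mem_orbit_closure {p : X → X} (hp : p ∈ EllisSet T X) (x y : X) :
    (p x, p y) ∈ closure {q : X × X | ∃ t : T, q = (t • x, t • y)} := by
  have hf : Continuous fun g : X → X => (g x, g y) :=
    (continuous_apply x).prodMk (continuous_apply y)
  have himg : (fun g : X → X => (g x, g y)) '' (Set.range fun t : T => fun x : X => t • x) ⊆
      {q : X × X | ∃ t : T, q = (t • x, t • y)} := by
    rintro _ ⟨_, ⟨t, rfl⟩, rfl⟩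
    exact ⟨t, rfl⟩
  have h1 : (p x, p y) ∈ (fun g : X → X => (g x, g y)) ''
      closure (Set.range fun t : T => fun x : X => t • x) := ⟨p, hp, rfl⟩
  exact closure_mono himg (image_closure_subset_closure_image hf h1)

/-- Conversely, every point of the orbit closure is the evaluation of some Ellis element. -/
lemma exists_ellis_of_mem_orbit_closure {x y : X} {a b : X}
    (h : (a, b) ∈ closure {q : X × X | ∃ t : T, q = (t • x, t • y)}) :
    ∃ p ∈ EllisSet T X, p x = a ∧ p y = b := by
  have hf : Continuous fun g : X → X => (g x, g y) :=
    (continuous_apply x).prodMk (continuous_apply y)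
  have hcpt : IsCompact ((fun g : X → X => (g x, g y)) '' EllisSet T X) :=
    ((isClosed_closure (s := Set.range fun t : T => fun x : X => t • x)).isCompact).image hf
  have hcl : IsClosed ((fun g : X → X => (g x, g y)) '' EllisSet T X) := hcpt.isClosed
  have hsub : {q : X × X | ∃ t : T, q = (t • x, t • y)} ⊆
      (fun g : X → X => (g x, g y)) '' EllisSet T X := by
    rintro _ ⟨t, rfl⟩
    exact ⟨fun x => t • x, translation_mem_ellis t, rfl⟩
  have := closure_minimal hsub hcl h
  obtain ⟨p, hp, heq⟩ := this
  exact ⟨p, hp, congrArg Prod.fst heq, congrArg Prod.snd heq⟩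

/-- Ellis–Numakura for sets of self-maps under composition. -/
lemma exists_idem_comp {α : Type*} [TopologicalSpace α] [CompactSpace α] [T2Space α]
    (s : Set (α → α)) (hne : s.Nonempty) (hcpt : IsCompact s)
    (hmul : ∀ f ∈ s, ∀ g ∈ s, f ∘ g ∈ s) : ∃ u ∈ s, u ∘ u = u := by
  letI : Mul (α → α) := ⟨fun f g => f ∘ g⟩
  letI : Semigroup (α → α) := ⟨fun _ _ _ => rfl⟩
  have hcont : ∀ r : α → α, Continuous (· * r) := fun r =>
    continuous_pi fun x => continuous_apply (r x)
  exact exists_idempotent_in_compact_subsemigroup hcont s hne hcpt hmul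

lemma orbit_closure_subset_of_mem {R : Set (X × X)} (hRclosed : IsClosed R)
    (hRinv : ∀ t : T, ∀ p ∈ R, ((t • p.1, t • p.2) : X × X) ∈ R)
    {a b : X} (hab : (a, b) ∈ R) :
    closure {q : X × X | ∃ t : T, q = (t • a, t • b)} ⊆ R := by
  apply closure_minimal _ hRclosed
  rintro _ ⟨t, rfl⟩
  exact hRinv t (a, b) hab

theorem capturing_between_proximal_compositions
    (hc : ∀ t : T, Continuous fun x : X => t • x)
    (R : Set (X × X)) (hRclosed : IsClosed R)
    (hRinv : ∀ t : T, ∀ p ∈ R, ((t • p.1, t • p.2) : X × X) ∈ R) :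
    RelComp (ProximalRel T X) R ⊆ CapturingSet T R ∧
      CapturingSet T R ⊆ RelComp (RelComp (ProximalRel T X) R) (ProximalRel T X) ∧
      ((∀ x : X, Dense {y : X | ∃ t : T, y = t • x}) →
        CapturingSet T R = RelComp (ProximalRel T X) R) := by
  -- Part 1: P ∘ R ⊆ C(R)
  have part1 : RelComp (ProximalRel T X) R ⊆ CapturingSet T R := by
    rintro ⟨x, y⟩ ⟨w, hxw, hwy⟩
    obtain ⟨z, hz⟩ := hxw
    obtain ⟨p, hp, hpx, hpw⟩ := exists_ellis_of_mem_orbit_closure (T := T) hz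
    refine ⟨(p x, p y), ellis_eval_mem_orbit_closure hp x y, ?_⟩
    have h1 : (p w, p y) ∈ R :=
      orbit_closure_subset_of_mem hRclosed hRinv hwy (ellis_eval_mem_orbit_closure hp w y)
    have : p x = p w := by rw [hpx, hpw]
    rw [this]
    exact h1
  refine ⟨part1, ?_, ?_⟩
  · -- Part 2: C(R) ⊆ P ∘ R ∘ P
    rintro ⟨x, y⟩ ⟨⟨a, b⟩, hab_orb, hab_R⟩
    obtain ⟨p, hp, hpx, hpy⟩ := exists_ellis_of_mem_orbit_closure (T := T) hab_orb
    -- the compact subsemigroup E ∘ p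
    set S : Set (X → X) := (fun r : X → X => r ∘ p) '' EllisSet T X with hS
    have hScpt : IsCompact S :=
      ((isClosed_closure (s := Set.range fun t : T => fun x : X => t • x)).isCompact).image
        (continuous_pi fun x => continuous_apply (p x))
    have hSne : S.Nonempty := ⟨(fun x : X => (1 : T) • x) ∘ p,
      fun x : X => (1 : T) • x, translation_mem_ellis 1, rfl⟩
    have hSmul : ∀ f ∈ S, ∀ g ∈ S, f ∘ g ∈ S := by
      rintro _ ⟨q, hq, rfl⟩ _ ⟨q', hq', rfl⟩
      exact ⟨q ∘ (p ∘ q'), comp_mem_ellis hc hq (comp_mem_ellis hc hp hq'), rfl⟩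
    obtain ⟨u, huS, huu⟩ := exists_idem_comp S hSne hScpt hSmul
    obtain ⟨q, hq, hqp⟩ := huS
    have hu_ellis : u ∈ EllisSet T X := by
      rw [← hqp]; exact comp_mem_ellis hc hq hp
    -- (u x, u y) ∈ R
    have huR : (u x, u y) ∈ R := by
      have h1 : (q a, q b) ∈ R :=
        orbit_closure_subset_of_mem hRclosed hRinv hab_R (ellis_eval_mem_orbit_closure hq a b)
      have hux : u x = q a := by rw [← hqp]; simp [Function.comp, hpx]
      have huy : u y = q b := by rw [← hqp]; simp [Function.comp, hpy]
      rw [hux, huy]; exact h1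
    -- (x, u x) proximal
    have hP1 : ((x, u x) : X × X) ∈ ProximalRel T X := by
      refine ⟨u x, ?_⟩
      have h1 := ellis_eval_mem_orbit_closure hu_ellis x (u x)
      have h2 : u (u x) = u x := congrFun huu x
      rwa [h2] at h1
    -- (u y, y) proximal
    have hP2 : ((u y, y) : X × X) ∈ ProximalRel T X := by
      refine ⟨u y, ?_⟩
      have h1 := ellis_eval_mem_orbit_closure hu_ellis (u y) y
      have h2 : u (u y) = u y := congrFun huu y
      rwa [h2] at h1
    exact ⟨u y, ⟨u x, hP1, huR⟩, hP2⟩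
  · -- Part 3: minimal case
    intro hmin
    refine Set.Subset.antisymm ?_ part1
    rintro ⟨x, y⟩ ⟨⟨a, b⟩, hab_orb, hab_R⟩
    obtain ⟨p, hp, hpx, hpy⟩ := exists_ellis_of_mem_orbit_closure (T := T) hab_orb
    set S : Set (X → X) := (fun r : X → X => r ∘ p) '' EllisSet T X with hS
    have hScpt : IsCompact S :=
      ((isClosed_closure (s := Set.range fun t : T => fun x : X => t • x)).isCompact).image
        (continuous_pi fun x => continuous_apply (p x))
    have hSmul : ∀ f ∈ S, ∀ g ∈ S, f ∘ g ∈ S := by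
      rintro _ ⟨q, hq, rfl⟩ _ ⟨q', hq', rfl⟩
      exact ⟨q ∘ (p ∘ q'), comp_mem_ellis hc hq (comp_mem_ellis hc hp hq'), rfl⟩
    have hpS : p ∈ S := by
      refine ⟨fun x : X => (1 : T) • x, translation_mem_ellis 1, ?_⟩
      funext z; simp
    -- The set A = S y is closed, nonempty and invariant; by minimality it is everything.
    have hyA : ∃ v ∈ S, v y = y := by
      set A : Set X := (fun r : X → X => r y) '' S with hA
      have hAcpt : IsCompact A := hScpt.image (continuous_apply y)
      have hAcl : IsClosed A := hAcpt.isClosed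
      have ha0 : p y ∈ A := ⟨p, hpS, rfl⟩
      have horb : {z : X | ∃ t : T, z = t • (p y)} ⊆ A := by
        rintro _ ⟨t, rfl⟩
        refine ⟨(fun x : X => t • x) ∘ p, ⟨(fun x : X => t • x) ∘ (fun x : X => (1 : T) • x),
          translation_comp_mem_ellis hc t (translation_mem_ellis 1), ?_⟩, rfl⟩
        funext z; simp
      have huniv : (Set.univ : Set X) ⊆ A := by
        have hd := (hmin (p y)).closure_eq
        calc (Set.univ : Set X) = closure {z : X | ∃ t : T, z = t • (p y)} := hd.symm
          _ ⊆ closure A := closure_mono horb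
          _ = A := hAcl.closure_eq
      obtain ⟨v, hvS, hvy⟩ := huniv (Set.mem_univ y)
      exact ⟨v, hvS, hvy⟩
    obtain ⟨v, hvS, hvy⟩ := hyA
    set G : Set (X → X) := S ∩ {r | r y = y} with hG
    have hGcpt : IsCompact G :=
      hScpt.inter_right (isClosed_eq (continuous_apply y) continuous_const)
    have hGne : G.Nonempty := ⟨v, hvS, hvy⟩
    have hGmul : ∀ f ∈ G, ∀ g ∈ G, f ∘ g ∈ G := by
      rintro f ⟨hfS, hfy⟩ g ⟨hgS, hgy⟩
      refine ⟨hSmul f hfS g hgS, ?_⟩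
      show f (g y) = y
      rw [hgy, hfy]
    obtain ⟨u, huG, huu⟩ := exists_idem_comp G hGne hGcpt hGmul
    obtain ⟨⟨q, hq, hqp⟩, huy⟩ := huG
    have hu_ellis : u ∈ EllisSet T X := by
      rw [← hqp]; exact comp_mem_ellis hc hq hp
    have huR : (u x, y) ∈ R := by
      have h1 : (q a, q b) ∈ R :=
        orbit_closure_subset_of_mem hRclosed hRinv hab_R (ellis_eval_mem_orbit_closure hq a b)
      have hux : u x = q a := by rw [← hqp]; simp [Function.comp, hpx]
      have huy' : u y = q b := by rw [← hqp]; simp [Function.comp, hpy]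
      have hy : u y = y := huy
      rw [hux, ← hy, huy']
      exact h1
    have hP1 : ((x, u x) : X × X) ∈ ProximalRel T X := by
      refine ⟨u x, ?_⟩
      have h1 := ellis_eval_mem_orbit_closure hu_ellis x (u x)
      have h2 : u (u x) = u x := congrFun huu x
      rwa [h2] at h1
    exact ⟨u x, hP1, huR⟩
end

section
/- Let (X,T) be a dynamical system on a compact Hausdorff space and let K ⊆ X be a closed T-invariant set. Then a point x ∈ X satisfies closure(Tx) ∩ K ≠ ∅ if and only if x is proximal to some point of K. -/
/-- Two points are proximal if some net along the action takes them to a common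
limit; in a compact Hausdorff space this means the orbit closure of the pair
meets the diagonal. -/
def IsProximal (T : Type*) [Group T] {X : Type*} [TopologicalSpace X] [MulAction T X]
    (x y : X) : Prop :=
  ∃ z : X, (z, z) ∈ closure {q : X × X | ∃ t : T, q = (t • x, t • y)}

theorem orbitClosure_meets_invariant_iff_proximal
    {T X : Type*} [Group T] [TopologicalSpace X] [CompactSpace X] [T2Space X]
    [MulAction T X] (hc : ∀ t : T, Continuous fun x : X => t • x)
    (K : Set X) (hKclosed : IsClosed K) (hKinv : ∀ t : T, (fun x => t • x) '' K = K)
    (x : X) :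
    (closure {y : X | ∃ t : T, y = t • x} ∩ K).Nonempty ↔ ∃ y ∈ K, IsProximal T x y := by
  constructor
  · rintro ⟨z, hzx, hzK⟩
    -- Ellis semigroup: closure of the translations in X → X
    letI : Mul (X → X) := ⟨fun f g => f ∘ g⟩
    letI : Semigroup (X → X) := ⟨fun _ _ _ => rfl⟩
    set Φ : T → (X → X) := fun t p => t • p with hΦ
    set E : Set (X → X) := closure (Set.range Φ) with hE
    have hmul_left : ∀ r : X → X, Continuous (· * r) := fun r =>
      continuous_pi fun p => continuous_apply (r p)
    -- every element of E maps K into K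
    have hEK : ∀ q ∈ E, ∀ k ∈ K, q k ∈ K := by
      intro q hq k hk
      have : E ⊆ (fun q : X → X => q k) ⁻¹' K := by
        apply closure_minimal _ (hKclosed.preimage (continuous_apply k))
        rintro _ ⟨t, rfl⟩
        exact (hKinv t) ▸ ⟨k, hk, rfl⟩
      exact this hq
    -- E is closed under composition
    have hEmul : ∀ q ∈ E, ∀ r ∈ E, q * r ∈ E := by
      have left : ∀ t : T, ∀ r ∈ E, Φ t * r ∈ E := by
        intro t r hr
        have hcont : Continuous (fun q : X → X => Φ t * q) :=
          continuous_pi fun p => (hc t).comp (continuous_apply p)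
        have : E ⊆ (fun q : X → X => Φ t * q) ⁻¹' E := by
          apply closure_minimal _ (isClosed_closure.preimage hcont)
          rintro _ ⟨s, rfl⟩
          exact subset_closure ⟨t * s, funext fun p => (mul_smul t s p)⟩
        exact this hr
      intro q hq r hr
      have : E ⊆ (· * r) ⁻¹' E := by
        apply closure_minimal _ (isClosed_closure.preimage (hmul_left r))
        rintro _ ⟨t, rfl⟩
        exact left t r hr
      exact this hq
    -- the subsemigroup of elements sending x into K
    have hEcompact : IsCompact E := isClosed_closure.isCompact
    set s : Set (X → X) := E ∩ {q | q x ∈ K} with hs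
    have hsnemp : s.Nonempty := by
      -- z is in the image of E under evaluation at x
      have himg : IsCompact ((fun q : X → X => q x) '' E) :=
        hEcompact.image (continuous_apply x)
      have horb : closure {y : X | ∃ t : T, y = t • x} ⊆ (fun q : X → X => q x) '' E := by
        apply closure_minimal _ himg.isClosed
        rintro _ ⟨t, rfl⟩
        exact ⟨Φ t, subset_closure ⟨t, rfl⟩, rfl⟩
      obtain ⟨p, hpE, hpx⟩ := horb hzx
      exact ⟨p, hpE, by simpa [hpx] using hzK⟩
    have hscompact : IsCompact s :=
      (isClosed_closure.inter (hKclosed.preimage (continuous_apply x))).isCompact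
    have hsmul : ∀ q ∈ s, ∀ r ∈ s, q * r ∈ s := by
      rintro q ⟨hqE, hqx⟩ r ⟨hrE, hrx⟩
      exact ⟨hEmul q hqE r hrE, hEK q hqE _ hrx⟩
    obtain ⟨u, ⟨huE, hux⟩, huu⟩ :=
      exists_idempotent_in_compact_subsemigroup hmul_left s hsnemp hscompact hsmul
    refine ⟨u x, hux, u x, ?_⟩
    have hF : Continuous (fun q : X → X => (q x, q (u x))) :=
      (continuous_apply x).prodMk (continuous_apply (u x))
    have : E ⊆ (fun q : X → X => (q x, q (u x))) ⁻¹'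
        closure {q : X × X | ∃ t : T, q = (t • x, t • u x)} := by
      apply closure_minimal _ (isClosed_closure.preimage hF)
      rintro _ ⟨t, rfl⟩
      exact subset_closure ⟨t, rfl⟩
    have huux : u (u x) = u x := congrFun huu x
    simpa [huux] using this huE
  · rintro ⟨y, hyK, z, hz⟩
    refine ⟨z, ?_, ?_⟩
    · have : z ∈ closure (Prod.fst '' {q : X × X | ∃ t : T, q = (t • x, t • y)}) := by
        have := image_closure_subset_closure_image (f := Prod.fst (α := X) (β := X))
          continuous_fst (s := {q : X × X | ∃ t : T, q = (t • x, t • y)})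
        exact this ⟨(z, z), hz, rfl⟩
      refine closure_mono ?_ this
      rintro _ ⟨_, ⟨t, rfl⟩, rfl⟩
      exact ⟨t, rfl⟩
    · have hsub : Prod.snd '' {q : X × X | ∃ t : T, q = (t • x, t • y)} ⊆ K := by
        rintro _ ⟨_, ⟨t, rfl⟩, rfl⟩
        exact (hKinv t) ▸ ⟨y, hyK, rfl⟩
      have : z ∈ closure (Prod.snd '' {q : X × X | ∃ t : T, q = (t • x, t • y)}) := by
        have := image_closure_subset_closure_image (f := Prod.snd (α := X) (β := X))
          continuous_snd (s := {q : X × X | ∃ t : T, q = (t • x, t • y)})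
        exact this ⟨(z, z), hz, rfl⟩
      exact (closure_minimal hsub hKclosed) this
end

section
/- Let (X,T) be a minimal topological dynamical system with T abelian, let d ≥ 1, and let H be a finite-index subgroup of T. Then the regionally proximal relation of order d of (X,T) equals the regionally proximal relation of order d of (X,H): RP^[d](X,T) = RP^[d](X,H). -/
/-- Nonempty subsets of `[d]`, indexing the starred coordinates of the cube. -/
def CubeStar (d : ℕ) : Type := {ε : Finset (Fin d) // ε.Nonempty}

/-- The (starred) face cube group of order `d` generated by elements of `S ⊆ T`:
the subgroup of `T^{2^d - 1}` generated by the elements `g^{(α)}` for `g ∈ S` and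
`α` an upper facet of `{0,1}^d` (restricted to nonempty `ε`). -/
def faceGroupStar {T : Type*} [Group T] (d : ℕ) (S : Set T) :
    Subgroup (CubeStar d → T) :=
  Subgroup.closure
    {f | ∃ t ∈ S, ∃ j : Fin d, f = fun ε => if j ∈ ε.1 then t else 1}

/-- The regionally proximal relation of order `d` of the action of (the subgroup
generated by) `S ⊆ T` on `X`: `(x, y)` belongs to it iff there are nets
`f_i ∈ F^[d]_*(S)`, `x_i, y_i ∈ X` and `a_* ∈ X^{2^d-1}` with `x_i → x`, `y_i → y`,
`f_i x_i^{[d]} → a_*` and `f_i y_i^{[d]} → a_*`, expressed via a closure. -/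
def RPrel {T : Type*} [Group T] (X : Type*) [TopologicalSpace X] [MulAction T X]
    (d : ℕ) (S : Set T) : Set (X × X) :=
  {p | ∃ a : CubeStar d → X,
    ((p.1, a), (p.2, a)) ∈ closure
      {q : (X × (CubeStar d → X)) × (X × (CubeStar d → X)) |
        ∃ x' y' : X, ∃ f ∈ faceGroupStar d S,
          q = ((x', fun ε => f ε • x'), (y', fun ε => f ε • y'))}}

/-- The cube-product homomorphism. -/
def cubeHom {T : Type*} [CommGroup T] (d : ℕ) : (Fin d → T) →* (CubeStar d → T) where
  toFun t := fun ε => ∏ j ∈ ε.1, t j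
  map_one' := by funext ε; simp
  map_mul' t s := by funext ε; simp [Finset.prod_mul_distrib]

lemma gen_eq_cubeHom {T : Type*} [CommGroup T] (d : ℕ) (j : Fin d) (t : T) :
    (fun ε : CubeStar d => if j ∈ ε.1 then t else 1) = cubeHom d (Pi.mulSingle j t) := by
  funext ε
  simp [cubeHom, Pi.mulSingle_apply, Finset.prod_ite_eq' ε.1 j fun _ => t]

lemma faceGroupStar_le_range {T : Type*} [CommGroup T] (d : ℕ) (S : Set T) :
    faceGroupStar d S ≤ (cubeHom (T := T) d).range := by
  apply Subgroup.closure_le _ |>.2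
  rintro f ⟨t, -, j, rfl⟩
  exact ⟨Pi.mulSingle j t, (gen_eq_cubeHom d j t).symm⟩

lemma cubeHom_mem_faceGroupStar {T : Type*} [CommGroup T] (d : ℕ) (S : Set T)
    (t : Fin d → T) (ht : ∀ j, t j ∈ S) :
    cubeHom d t ∈ faceGroupStar d S := by
  have : cubeHom d t = ∏ j : Fin d, fun ε : CubeStar d => if j ∈ ε.1 then t j else 1 := by
    funext ε
    rw [Finset.prod_apply]
    simp [cubeHom, Finset.prod_ite_mem, Finset.univ_inter]
  rw [this]
  exact Subgroup.prod_mem _ fun j _ =>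
    Subgroup.subset_closure ⟨t j, ht j, j, rfl⟩


/-- For a minimal system with abelian acting group, the regionally proximal
relation of order `d` is unchanged when passing to a finite-index subgroup. -/
theorem RP_eq_RP_of_finiteIndex
    {T X : Type*} [CommGroup T] [TopologicalSpace X] [CompactSpace X] [T2Space X]
    [MulAction T X] (hc : ∀ t : T, Continuous fun x : X => t • x)
    (hmin : ∀ x : X, Dense {y : X | ∃ t : T, y = t • x})
    (d : ℕ) (hd : 1 ≤ d) (H : Subgroup T) [H.FiniteIndex] :
    RPrel X d (Set.univ : Set T) = RPrel X d (H : Set T) := by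
  have hmono : faceGroupStar d (H : Set T) ≤ faceGroupStar d (Set.univ : Set T) :=
    Subgroup.closure_mono (by rintro f ⟨t, -, j, rfl⟩; exact ⟨t, trivial, j, rfl⟩)
  apply Set.Subset.antisymm
  · rintro ⟨x, y⟩ ⟨a, ha⟩
    -- coset representatives indexed by `c : Fin d → T ⧸ H`
    have : Finite (T ⧸ H) := H.finite_quotient_of_finiteIndex
    set QH : Set ((X × (CubeStar d → X)) × (X × (CubeStar d → X))) :=
      {q | ∃ x' y' : X, ∃ f ∈ faceGroupStar d (H : Set T),
          q = ((x', fun ε => f ε • x'), (y', fun ε => f ε • y'))} with hQH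
    set g : (Fin d → T ⧸ H) → (CubeStar d → T) :=
      fun c => cubeHom d fun j => (c j).out with hg
    set Qc : (Fin d → T ⧸ H) → Set ((X × (CubeStar d → X)) × (X × (CubeStar d → X))) :=
      fun c => {q | ∃ x' y' : X, ∃ f ∈ faceGroupStar d (H : Set T),
          q = ((x', fun ε => (g c ε * f ε) • x'),
               (y', fun ε => (g c ε * f ε) • y'))} with hQc
    -- the full set of configurations is covered by the finitely many `Qc c`
    have hcover : {q : (X × (CubeStar d → X)) × (X × (CubeStar d → X)) |
        ∃ x' y' : X, ∃ f ∈ faceGroupStar d (Set.univ : Set T),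
          q = ((x', fun ε => f ε • x'), (y', fun ε => f ε • y'))} ⊆
        ⋃ c, closure (Qc c) := by
      rintro q ⟨x', y', f, hf, rfl⟩
      obtain ⟨t, rfl⟩ := faceGroupStar_le_range d _ hf
      set c : Fin d → T ⧸ H := fun j => QuotientGroup.mk (t j) with hc'
      refine Set.mem_iUnion.2 ⟨c, subset_closure ?_⟩
      set h : Fin d → T := fun j => ((c j).out)⁻¹ * t j with hh
      have hmem : ∀ j, h j ∈ H := by
        intro j
        have h1 : (((c j).out : T) : T ⧸ H) = ((t j : T) : T ⧸ H) :=
          QuotientGroup.out_eq' (c j)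
        exact QuotientGroup.eq.1 h1
      have hfh : cubeHom d h ∈ faceGroupStar d (H : Set T) :=
        cubeHom_mem_faceGroupStar d _ h hmem
      refine ⟨x', y', cubeHom d h, hfh, ?_⟩
      have key : g c * cubeHom d h = cubeHom d t := by
        show cubeHom d (fun j => (c j).out) * cubeHom d h = cubeHom d t
        rw [← map_mul]
        congr 1
        funext j
        simp [hh, mul_inv_cancel_left]
      have hptw : ∀ ε : CubeStar d, cubeHom d t ε = g c ε * cubeHom d h ε := by
        intro ε
        rw [← Pi.mul_apply, key]
      simp only [hptw]
    -- hence the closure point lies in some `closure (Qc c)`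
    have hclosed : IsClosed (⋃ c, closure (Qc c)) :=
      isClosed_iUnion_of_finite fun c => isClosed_closure
    have := closure_minimal hcover hclosed ha
    obtain ⟨c, hcmem⟩ := Set.mem_iUnion.1 this
    -- translate by `(g c)⁻¹`
    refine ⟨fun ε => (g c ε)⁻¹ • a ε, ?_⟩
    have hΦ : Continuous (fun q : (X × (CubeStar d → X)) × (X × (CubeStar d → X)) =>
        ((q.1.1, fun ε => (g c ε)⁻¹ • q.1.2 ε),
         (q.2.1, fun ε => (g c ε)⁻¹ • q.2.2 ε))) := by
      refine Continuous.prodMk (Continuous.prodMk ?_ ?_) (Continuous.prodMk ?_ ?_)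
      · exact continuous_fst.comp continuous_fst
      · exact continuous_pi fun ε =>
          (hc _).comp ((continuous_apply ε).comp (continuous_snd.comp continuous_fst))
      · exact continuous_fst.comp continuous_snd
      · exact continuous_pi fun ε =>
          (hc _).comp ((continuous_apply ε).comp (continuous_snd.comp continuous_snd))
    have hmaps : Set.MapsTo (fun q : (X × (CubeStar d → X)) × (X × (CubeStar d → X)) =>
        ((q.1.1, fun ε => (g c ε)⁻¹ • q.1.2 ε),
         (q.2.1, fun ε => (g c ε)⁻¹ • q.2.2 ε))) (Qc c) QH := by
      rintro q ⟨x', y', f, hf, rfl⟩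
      refine ⟨x', y', f, hf, ?_⟩
      simp only [mul_smul, inv_smul_smul]
    have := map_mem_closure hΦ hcmem hmaps
    exact this
  · rintro ⟨x, y⟩ ⟨a, ha⟩
    refine ⟨a, closure_mono ?_ ha⟩
    rintro q ⟨x', y', f, hf, rfl⟩
    exact ⟨x', y', f, hmono hf, rfl⟩
end
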